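/- arXiv:2411.03157 — 3 statements merged into one kernel-verified Lean document; each statement's English description precedes it below -/
import Mathlib

section
/- Under the same game model, if from state 1 the set of reachable states does not contain 100, then there exist six consecutive cells m, m+1, ..., m+5 (with m+5 ≤ 99) such that each is the entrance of a chute, i.e., f(m+i) < m+i for all i ∈ {0,...,5}. (Necessity of a chute-barrier for an unwinnable board.) -/
def mpTarget (f : ℕ → ℕ) (s d : ℕ) : ℕ := if s + d ≤ 100 then f (s + d) else s

def mpStep (f : ℕ → ℕ) (s t : ℕ) : Prop := ∃ d, 1 ≤ d ∧ d ≤ 6 ∧ t = mpTarget f s d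

def mpReach (f : ℕ → ℕ) : ℕ → ℕ → Prop := Relation.ReflTransGen (mpStep f)

/-- If 100 is not reachable from 1, then a chute-barrier exists. -/
theorem unwinnable_has_chute_barrier (f : ℕ → ℕ)
    (hf1 : f 1 = 1) (hf100 : f 100 = 100)
    (hrange : ∀ k, 2 ≤ k → k ≤ 99 → 2 ≤ f k ∧ f k ≤ 99)
    (hunw : ¬ mpReach f 1 100) :
    ∃ m, m + 5 ≤ 99 ∧ ∀ i, i ≤ 5 → f (m + i) < m + i := by
  classical
  set S : Set ℕ := {n | mpReach f 1 n} with hS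
  have h1S : (1:ℕ) ∈ S := Relation.ReflTransGen.refl
  have hbound : ∀ t ∈ S, 1 ≤ t ∧ t ≤ 99 := by
    intro t ht
    induction ht with
    | refl => omega
    | tail hab hstep ih =>
      rename_i b c
      have hib := ih
      obtain ⟨d, hd1, hd6, rfl⟩ := hstep
      have hreach : mpReach f 1 (mpTarget f b d) :=
        Relation.ReflTransGen.tail hab ⟨d, hd1, hd6, rfl⟩
      unfold mpTarget at *
      split
      · rename_i h
        have hb2 : 1 ≤ b + d := by omega
        rcases Nat.lt_or_ge (b + d) 2 with h2 | h2
        · have : b + d = 1 := by omega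
          rw [this, hf1]; omega
        · rcases Nat.lt_or_ge (b + d) 100 with h3 | h3
          · have := hrange (b + d) h2 (by omega)
            omega
          · have : b + d = 100 := by omega
            rw [this] at hreach ⊢
            rw [hf100] at hreach
            exact absurd hreach hunw
      · omega
  set k : ℕ := sSup S with hk
  have hmem : k ∈ S := Nat.sSup_mem ⟨1, h1S⟩ ⟨99, fun t ht => (hbound t ht).2⟩
  have hle : ∀ t ∈ S, t ≤ k := fun t ht => le_csSup ⟨99, fun t ht => (hbound t ht).2⟩ ht
  have hstepS : ∀ d, 1 ≤ d → d ≤ 6 → mpTarget f k d ∈ S :=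
    fun d h1 h2 => Relation.ReflTransGen.tail hmem ⟨d, h1, h2, rfl⟩
  have hk99 : k ≤ 99 := (hbound k hmem).2
  have hk93 : k ≤ 93 := by
    by_contra h
    push_neg at h
    have h1 : 1 ≤ 100 - k := by omega
    have h2 : 100 - k ≤ 6 := by omega
    have := hstepS (100 - k) h1 h2
    unfold mpTarget at this
    rw [if_pos (by omega)] at this
    have e : k + (100 - k) = 100 := by omega
    rw [e, hf100] at this
    exact absurd this hunw
  refine ⟨k + 1, by omega, fun i hi => ?_⟩
  have h1 : 1 ≤ i + 1 := by omega
  have h2 : i + 1 ≤ 6 := by omega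
  have := hstepS (i + 1) h1 h2
  unfold mpTarget at this
  rw [if_pos (by omega)] at this
  have := hle _ this
  have e : k + 1 + i = k + (i + 1) := by omega
  rw [e]
  omega
end

section
/- Let k be the maximum state reachable from state 1 in the Moksha-Patam game. If 94 ≤ k ≤ 99, then 100 is reachable from 1. -/
/-- If the maximal state k reachable from 1 satisfies 94 ≤ k ≤ 99,
then 100 is reachable from 1. -/
theorem max_reachable_near_end (f : ℕ → ℕ) (hf100 : f 100 = 100) (k : ℕ)
    (hreach : mpReach f 1 k) (hmax : ∀ j, mpReach f 1 j → j ≤ k)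
    (h94 : 94 ≤ k) (h99 : k ≤ 99) :
    mpReach f 1 100 := by
  apply Relation.ReflTransGen.tail hreach
  exact ⟨100 - k, by omega, by omega, by
    have h : k + (100 - k) = 100 := by omega
    simp [mpTarget, h, hf100]⟩
end

section
/- Let k be the maximum state reachable from state 1 in the Moksha-Patam game, and suppose 2 ≤ k ≤ 93. If at least one of the cells k+1, ..., k+6 is not the entrance of a chute (i.e., f(c) ≥ c for some c ∈ {k+1,...,k+6}), then there is a state strictly greater than k reachable from 1, contradicting maximality; hence all of k+1,...,k+6 are chute entrances. -/
/-- If the maximal state k reachable from 1 satisfies 2 ≤ k ≤ 93, then every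
cell among k+1,...,k+6 is the entrance of a chute. -/
theorem max_reachable_forces_chutes (f : ℕ → ℕ) (k : ℕ)
    (hreach : mpReach f 1 k) (hmax : ∀ j, mpReach f 1 j → j ≤ k)
    (h2 : 2 ≤ k) (h93 : k ≤ 93) :
    ∀ c, k + 1 ≤ c → c ≤ k + 6 → f c < c := by
  intro c hc1 hc6
  by_contra h
  push_neg at h
  have hd1 : 1 ≤ c - k := by omega
  have hd6 : c - k ≤ 6 := by omega
  have hs : k + (c - k) = c := by omega
  have hle : k + (c - k) ≤ 100 := by omega
  have hstep : mpStep f k (f c) := by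
    refine ⟨c - k, hd1, hd6, ?_⟩
    rw [mpTarget, hs]; simp [show c ≤ 100 by omega]
  have hr : mpReach f 1 (f c) := hreach.tail hstep
  have := hmax _ hr
  omega
end
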